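/- Fix a factor index k and symmetric matrices D₁,…,D_r at which V := I_n + ∑_{k=1}^r ∑_{j=1}^{l_k} Z_{(k,j)}·D_k·Z_{(k,j)}ᵀ is positive definite and Xᵀ·V⁻¹·X is invertible. Consider the restricted log-likelihood l_R := l − (1/2)·( −p·log σ² + log det(Xᵀ·V⁻¹·X) ) as a function of v ∈ ℝ^{q_k(q_k+1)/2} through D_k equal to the unique symmetric matrix with half-vectorization v, all other quantities held fixed. Then at v = vech(D_k), the gradient of l_R equals the gradient of l plus the correction term (1/2)·𝒟_{q_k}ᵀ·vec( ∑_{j=1}^{l_k} Z_{(k,j)}ᵀ·V⁻¹·X·(Xᵀ·V⁻¹·X)⁻¹·Xᵀ·V⁻¹·Z_{(k,j)} ). -/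

import Mathlib

/-!
Only the term `−½ log det(Xᵀ V⁻¹ X)` separates `l_R` from `l`, so the claim is a computation of its
derivative. Along the line `vech D_k + t·e_w` the matrix `V` moves affinely, as `V + t W` with
`W = ∑_j Z_{(k,j)} unvech(e_w) Z_{(k,j)}ᵀ`. Jacobi's formula together with `(V⁻¹)' = −V⁻¹ V' V⁻¹`
gives the derivative `−tr((XᵀV⁻¹X)⁻¹ XᵀV⁻¹ W V⁻¹X)` of `log det(XᵀV⁻¹X)`, and cycling the trace
turns it into `−tr(N · unvech e_w) = −(𝒟ᵀ vec N)_w`, where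
`N = ∑_j Z_{(k,j)}ᵀ V⁻¹X (XᵀV⁻¹X)⁻¹ XᵀV⁻¹ Z_{(k,j)}`.
-/

open Matrix MeasureTheory ProbabilityTheory

/-- Column-major vectorization of a matrix: the entry of `vec A` at index `(j, i)`
(column `j`, row `i`) is `A i j`. -/
def vec {α β R : Type*} (A : Matrix α β R) : β × α → R := fun p => A p.2 p.1

/-- Index type for the half-vectorization of a `q × q` matrix: pairs `(j, i)`
(column `j`, row `i`) lying on or below the diagonal, i.e. with `j ≤ i`. -/
abbrev VechIdx (q : ℕ) := { p : Fin q × Fin q // p.1 ≤ p.2 }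

/-- Half-vectorization: stacks the entries of `A` on and below the diagonal column by column. -/
def vech {R : Type*} {q : ℕ} (A : Matrix (Fin q) (Fin q) R) : VechIdx q → R :=
  fun p => A p.1.2 p.1.1

/-- The duplication matrix `𝒟_q`: the unique `q² × (q(q+1)/2)` matrix with
`𝒟_q · vech A = vec A` for every symmetric `q × q` matrix `A`. -/
def dup (q : ℕ) : Matrix (Fin q × Fin q) (VechIdx q) ℝ := fun v w =>
  if (v.1 = w.1.1 ∧ v.2 = w.1.2) ∨ (v.1 = w.1.2 ∧ v.2 = w.1.1) then 1 else 0

/-- The commutation matrix `K_{q,q}`: the unique `q² × q²` matrix with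
`K_{q,q} · vec A = vec Aᵀ` for every `q × q` matrix `A`. -/
def commMat (q : ℕ) : Matrix (Fin q × Fin q) (Fin q × Fin q) ℝ := fun a b =>
  if a.1 = b.2 ∧ a.2 = b.1 then 1 else 0

/-- The symmetrization matrix `N_q = (1/2)(I_{q²} + K_{q,q})`. -/
noncomputable def Nmat (q : ℕ) : Matrix (Fin q × Fin q) (Fin q × Fin q) ℝ :=
  (1 / 2 : ℝ) • (1 + commMat q)

/-- The unique symmetric matrix whose half-vectorization is `v`. -/
def unvech {q : ℕ} (v : VechIdx q → ℝ) : Matrix (Fin q) (Fin q) ℝ := fun i j =>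
  if h : j ≤ i then v ⟨(j, i), h⟩ else v ⟨(i, j), (not_le.mp h).le⟩

-- Any norm would do, all norms being equivalent in finite dimension; this one makes square
-- matrices a normed algebra, which the derivative of inversion needs.
attribute [local instance] Matrix.linftyOpNormedAddCommGroup Matrix.linftyOpNormedSpace
  Matrix.linftyOpNormedRing Matrix.linftyOpNormedAlgebra

theorem hasDerivAt_add_smul {𝕜 F : Type*} [NontriviallyNormedField 𝕜] [NormedAddCommGroup F]
    [NormedSpace 𝕜 F] (a v : F) (t : 𝕜) :
    HasDerivAt (fun s : 𝕜 => a + s • v) v t := by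
  have h := ((hasDerivAt_id' (x := t)).smul_const v).const_add a
  rwa [one_smul] at h

theorem Fintype.sum_apply_update {ι M : Type*} [Fintype ι] [DecidableEq ι] [AddCommGroup M]
    {β : ι → Type*} (F : ∀ i, β i → M) (D : ∀ i, β i) (k : ι) (a : β k) :
    ∑ i, F i (Function.update D k a i) = ∑ i, F i (D i) + (F k a - F k (D k)) := by
  simp only [Function.apply_update F D k a, Finset.sum_update_of_mem (Finset.mem_univ k),
    ← Finset.add_sum_erase _ _ (Finset.mem_univ k), Finset.sdiff_singleton_eq_erase]
  abel

theorem Matrix.trace_mul_sum_mul_mul_transpose_mul {R ι a b c : Type*} [CommRing R] [Fintype ι]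
    [Fintype a] [Fintype b] [Fintype c] (P : Matrix a b R) (Z : ι → Matrix b c R)
    (M : Matrix c c R) (Q : Matrix b a R) :
    trace (P * (∑ j, Z j * M * (Z j)ᵀ) * Q) = trace ((∑ j, (Z j)ᵀ * Q * P * Z j) * M) := by
  simp only [Matrix.mul_sum, Matrix.sum_mul, trace_sum]
  refine Finset.sum_congr rfl fun j _ => ?_
  rw [show P * (Z j * M * (Z j)ᵀ) * Q = P * Z j * M * ((Z j)ᵀ * Q) by
    simp only [Matrix.mul_assoc], trace_mul_comm]
  simp only [Matrix.mul_assoc]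

section MatrixCalculus

variable {𝕜 : Type*} [RCLike 𝕜] {l m n o : Type*} [Fintype l] [Fintype m] [Fintype n]
  [Fintype o] {E : Type*} [NormedAddCommGroup E] [NormedSpace 𝕜 E]

theorem HasDerivAt.const_mul_mul_const_matrix {A : 𝕜 → Matrix m n 𝕜} {A' : Matrix m n 𝕜}
    {t : 𝕜} (hA : HasDerivAt A A' t) (L : Matrix l m 𝕜) (R : Matrix n o 𝕜) :
    HasDerivAt (fun s => L * A s * R) (L * A' * R) t :=
  (mulRightLinearMap l 𝕜 R ∘ₗ mulLeftLinearMap n 𝕜 L).toContinuousLinearMap.hasFDerivAt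
    |>.comp_hasDerivAt t hA

theorem DifferentiableAt.const_mul_mul_const_matrix {A : E → Matrix m n 𝕜} {x : E}
    (hA : DifferentiableAt 𝕜 A x) (L : Matrix l m 𝕜) (R : Matrix n o 𝕜) :
    DifferentiableAt 𝕜 (fun y => L * A y * R) x :=
  (mulRightLinearMap l 𝕜 R ∘ₗ mulLeftLinearMap n 𝕜 L).toContinuousLinearMap.differentiableAt
    |>.comp x hA

variable [DecidableEq m]

theorem Matrix.differentiable_det : Differentiable 𝕜 (det : Matrix m m 𝕜 → 𝕜) := by
  simp only [funext det_apply']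
  fun_prop

theorem Matrix.hasDerivAt_det_one_add_smul (C : Matrix m m 𝕜) :
    HasDerivAt (fun t : 𝕜 => (1 + t • C).det) C.trace 0 := by
  simp only [fun t => det_one_add_smul t C]
  set Q := (1 + (Polynomial.X : Polynomial 𝕜) • C.map Polynomial.C).det.divX.divX
  have h := (((hasDerivAt_id' (x := (0 : 𝕜))).const_mul C.trace).const_add 1).fun_add
    ((Q.hasDerivAt 0).fun_mul (hasDerivAt_pow 2 (0 : 𝕜)))
  simpa using h

/-- Jacobi's formula. -/
theorem Matrix.fderiv_det_apply {A : Matrix m m 𝕜} (hA : IsUnit A.det) (H : Matrix m m 𝕜) :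
    fderiv 𝕜 det A H = A.det * trace (A⁻¹ * H) := by
  have h := (differentiable_det (A + (0 : 𝕜) • H)).hasFDerivAt.comp_hasDerivAt (0 : 𝕜)
    (hasDerivAt_add_smul A H (0 : 𝕜))
  rw [zero_smul, add_zero] at h
  refine HasDerivAt.unique (f := fun t : 𝕜 => (A + t • H).det) h ?_
  have hfactor : (fun t : 𝕜 => (A + t • H).det) = fun t => A.det * (1 + t • (A⁻¹ * H)).det := by
    funext t
    rw [← det_mul, Matrix.mul_add, Matrix.mul_one, Matrix.mul_smul,
      mul_nonsing_inv_cancel_left _ _ hA]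
  rw [hfactor]
  exact (hasDerivAt_det_one_add_smul _).const_mul _

theorem HasDerivAt.det {A : 𝕜 → Matrix m m 𝕜} {A' : Matrix m m 𝕜} {t : 𝕜}
    (hA : HasDerivAt A A' t) (ht : IsUnit (A t).det) :
    HasDerivAt (fun s => (A s).det) ((A t).det * trace ((A t)⁻¹ * A')) t :=
  ((differentiable_det (A t)).hasFDerivAt.comp_hasDerivAt t hA).congr_deriv
    (fderiv_det_apply ht A')

theorem HasDerivAt.matrix_inv {A : 𝕜 → Matrix m m 𝕜} {A' : Matrix m m 𝕜} {t : 𝕜}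
    (hA : HasDerivAt A A' t) (ht : IsUnit (A t).det) :
    HasDerivAt (fun s => (A s)⁻¹) (-((A t)⁻¹ * A' * (A t)⁻¹)) t := by
  have hu : IsUnit (A t) := (isUnit_iff_isUnit_det _).mpr ht
  have h := hasFDerivAt_ringInverse (𝕜 := 𝕜) hu.unit
  rw [hu.unit_spec] at h
  replace h := h.comp_hasDerivAt t hA
  rw [_root_.neg_apply, ContinuousLinearMap.mulLeftRight_apply, coe_units_inv,
    hu.unit_spec] at h
  rwa [show (fun s => (A s)⁻¹) = Ring.inverse ∘ A from
    funext fun s => nonsing_inv_eq_ringInverse _]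

theorem DifferentiableAt.matrix_inv {A : E → Matrix m m 𝕜} {x : E}
    (hA : DifferentiableAt 𝕜 A x) (hx : IsUnit (A x).det) :
    DifferentiableAt 𝕜 (fun y => (A y)⁻¹) x := by
  rw [show (fun y => (A y)⁻¹) = Ring.inverse ∘ A from
    funext fun y => nonsing_inv_eq_ringInverse _]
  exact hA.inverse ((isUnit_iff_isUnit_det _).mpr hx)

end MatrixCalculus

section LogDet

variable {m p : Type*} [Fintype m] [Fintype p] [DecidableEq m]

theorem HasDerivAt.log_det {A : ℝ → Matrix m m ℝ} {A' : Matrix m m ℝ} {t : ℝ}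
    (hA : HasDerivAt A A' t) (ht : IsUnit (A t).det) :
    HasDerivAt (fun s => Real.log (A s).det) (trace ((A t)⁻¹ * A')) t := by
  have h := (hA.det ht).log ht.ne_zero
  rwa [mul_div_cancel_left₀ _ ht.ne_zero] at h

theorem DifferentiableAt.log_det {E : Type*} [NormedAddCommGroup E] [NormedSpace ℝ E]
    {A : E → Matrix m m ℝ} {x : E} (hA : DifferentiableAt ℝ A x) (hx : (A x).det ≠ 0) :
    DifferentiableAt ℝ (fun y => Real.log (A y).det) x :=
  ((differentiable_det _).comp x hA).log hx

theorem hasDerivAt_log_det_transpose_mul_inv_add_smul_mul [DecidableEq p] (X : Matrix m p ℝ)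
    {V : Matrix m m ℝ} (W : Matrix m m ℝ) (hV : IsUnit V.det) (hX : IsUnit (Xᵀ * V⁻¹ * X).det) :
    HasDerivAt (fun t : ℝ => Real.log (Xᵀ * (V + t • W)⁻¹ * X).det)
      (-trace ((Xᵀ * V⁻¹ * X)⁻¹ * Xᵀ * V⁻¹ * W * (V⁻¹ * X))) 0 := by
  have hinv := (hasDerivAt_add_smul V W (0 : ℝ)).matrix_inv (by simpa using hV)
  have h := (hinv.const_mul_mul_const_matrix Xᵀ X).log_det (by simpa using hX)
  convert h using 1
  simp [Matrix.mul_neg, Matrix.neg_mul, Matrix.mul_assoc]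

variable [DecidableEq p] {E : Type*} [NormedAddCommGroup E] [NormedSpace ℝ E]
  (X : Matrix m p ℝ) {F : E → Matrix m m ℝ} {x : E}

theorem DifferentiableAt.log_det_transpose_mul_inv_mul (hF : DifferentiableAt ℝ F x)
    (hFx : IsUnit (F x).det) (hX : IsUnit (Xᵀ * (F x)⁻¹ * X).det) :
    DifferentiableAt ℝ (fun y => Real.log (Xᵀ * (F y)⁻¹ * X).det) x :=
  ((hF.matrix_inv hFx).const_mul_mul_const_matrix Xᵀ X).log_det hX.ne_zero

theorem fderiv_log_det_transpose_mul_inv_mul_apply_of_line {d : E} {V W : Matrix m m ℝ}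
    (hF : DifferentiableAt ℝ F x) (hline : ∀ t : ℝ, F (x + t • d) = V + t • W)
    (hV : IsUnit V.det) (hX : IsUnit (Xᵀ * V⁻¹ * X).det) :
    fderiv ℝ (fun y => Real.log (Xᵀ * (F y)⁻¹ * X).det) x d =
      -trace ((Xᵀ * V⁻¹ * X)⁻¹ * Xᵀ * V⁻¹ * W * (V⁻¹ * X)) := by
  have hFx : F x = V := by simpa using hline 0
  subst hFx
  refine ((hF.log_det_transpose_mul_inv_mul X hV hX).hasFDerivAt.hasLineDerivAt d).unique ?_
  simp only [HasLineDerivAt, hline]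
  exact hasDerivAt_log_det_transpose_mul_inv_add_smul_mul X W hV hX

end LogDet

section HalfVectorization

variable {q : ℕ}

theorem unvech_vech_of_isSymm {A : Matrix (Fin q) (Fin q) ℝ} (hA : A.IsSymm) :
    unvech (vech A) = A := by
  ext i j
  by_cases h : j ≤ i
  · simp [unvech, vech, h]
  · simp [unvech, vech, h, hA.apply i j]

theorem unvech_add (u v : VechIdx q → ℝ) : unvech (u + v) = unvech u + unvech v := by
  ext i j
  by_cases h : j ≤ i <;> simp [unvech, h]

theorem unvech_smul (c : ℝ) (v : VechIdx q → ℝ) : unvech (c • v) = c • unvech v := by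
  ext i j
  by_cases h : j ≤ i <;> simp [unvech, h]

theorem differentiable_unvech :
    Differentiable ℝ (unvech : (VechIdx q → ℝ) → Matrix (Fin q) (Fin q) ℝ) :=
  (⟨⟨unvech, unvech_add⟩, unvech_smul⟩ : (VechIdx q → ℝ) →ₗ[ℝ] _)
    |>.toContinuousLinearMap.differentiable

theorem unvech_single_one_apply (w : VechIdx q) (c d : Fin q) :
    unvech (Pi.single w 1) c d = dup q (c, d) w := by
  obtain ⟨⟨a, b⟩, hab⟩ := w
  simp only [Fin.le_def] at hab
  by_cases h : d ≤ c <;>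
  · simp only [unvech, dup, h, Pi.single_apply, dite_true, dite_false, Subtype.mk.injEq,
      Prod.mk.injEq]
    rw [Fin.le_def] at h
    congr 1
    simp only [Fin.ext_iff, eq_iff_iff]
    omega

theorem trace_mul_unvech_single_one (N : Matrix (Fin q) (Fin q) ℝ) (w : VechIdx q) :
    trace (N * unvech (Pi.single w 1)) = ((dup q)ᵀ *ᵥ _root_.vec N) w := by
  simp only [trace, diag, mul_apply, mulVec, dotProduct, transpose_apply, _root_.vec,
    unvech_single_one_apply, Fintype.sum_prod_type]
  rw [Finset.sum_comm]
  simp only [mul_comm]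

end HalfVectorization

section MixedModelCov

variable {ι N : Type*} [Fintype ι] [DecidableEq ι] [DecidableEq N]
  {L : ι → Type*} [∀ k, Fintype (L k)] {q : ι → ℕ}
  (Z : (k : ι) → L k → Matrix N (Fin (q k)) ℝ) (D : (k : ι) → Matrix (Fin (q k)) (Fin (q k)) ℝ)

def mixedModelCov : Matrix N N ℝ := 1 + ∑ k, ∑ j, Z k j * D k * (Z k j)ᵀ

theorem mixedModelCov_update (k : ι) (M : Matrix (Fin (q k)) (Fin (q k)) ℝ) :
    mixedModelCov Z (Function.update D k M) =
      mixedModelCov Z D + ∑ j, Z k j * (M - D k) * (Z k j)ᵀ := by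
  rw [mixedModelCov, mixedModelCov, Fintype.sum_apply_update
    (fun k (M : Matrix (Fin (q k)) (Fin (q k)) ℝ) => ∑ j, Z k j * M * (Z k j)ᵀ)]
  simp only [Matrix.mul_sub, Matrix.sub_mul, Finset.sum_sub_distrib, add_assoc]

theorem mixedModelCov_update_unvech_vech_add_smul {k : ι} (hD : (D k).IsSymm)
    (d : VechIdx (q k) → ℝ) (t : ℝ) :
    mixedModelCov Z (Function.update D k (unvech (vech (D k) + t • d))) =
      mixedModelCov Z D + t • ∑ j, Z k j * unvech d * (Z k j)ᵀ := by
  rw [mixedModelCov_update, unvech_add, unvech_smul, unvech_vech_of_isSymm hD, add_sub_cancel_left]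
  simp only [Matrix.mul_smul, Matrix.smul_mul, Finset.smul_sum]

theorem differentiable_mixedModelCov_update_unvech [Fintype N] (k : ι) :
    Differentiable ℝ (fun v => mixedModelCov Z (Function.update D k (unvech v))) := by
  simp only [mixedModelCov_update]
  exact fun v => (DifferentiableAt.fun_sum fun j _ =>
    ((differentiable_unvech v).sub_const (D k)).const_mul_mul_const_matrix _ _).const_add _

end MixedModelCov

theorem stmt14_general (n p r : ℕ) (σ : ℝ)
    (e : Fin n → ℝ) (X : Matrix (Fin n) (Fin p) ℝ)
    (l q : Fin r → ℕ)
    (Z : (k : Fin r) → Fin (l k) → Matrix (Fin n) (Fin (q k)) ℝ)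
    (D : (k : Fin r) → Matrix (Fin (q k)) (Fin (q k)) ℝ)
    (hDsymm : ∀ k', (D k').IsSymm)
    (k : Fin r)
    (V : Matrix (Fin n) (Fin n) ℝ)
    (hV : V = 1 + ∑ k', ∑ j, Z k' j * D k' * (Z k' j)ᵀ)
    (hVpd : V.PosDef)
    (hXVX : IsUnit (Xᵀ * V⁻¹ * X).det)
    -- the map sending `v` to the matrix `V` computed with `D_k` replaced by the unique
    -- symmetric matrix whose half-vectorization is `v`
    (Vf : (VechIdx (q k) → ℝ) → Matrix (Fin n) (Fin n) ℝ)
    (hVf : Vf = fun v =>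
      1 + ∑ k', ∑ j, Z k' j * Function.update D k (unvech v) k' * (Z k' j)ᵀ)
    -- the log-likelihood as a function of `vech(D_k)`
    (g : (VechIdx (q k) → ℝ) → ℝ)
    (hg : g = fun v =>
      -(1 / 2 : ℝ) * ((n : ℝ) * Real.log (σ ^ 2)
        + (σ ^ 2)⁻¹ * (e ⬝ᵥ ((Vf v)⁻¹ *ᵥ e))
        + Real.log (Vf v).det))
    -- the restricted log-likelihood as a function of `vech(D_k)`
    (gR : (VechIdx (q k) → ℝ) → ℝ)
    (hgR : gR = fun v =>
      g v - (1 / 2 : ℝ) * (-(p : ℝ) * Real.log (σ ^ 2)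
        + Real.log (Xᵀ * (Vf v)⁻¹ * X).det)) :
    DifferentiableAt ℝ gR (vech (D k)) ∧
    DifferentiableAt ℝ g (vech (D k)) ∧
    ∀ w : VechIdx (q k),
      fderiv ℝ gR (vech (D k)) (Pi.single w 1) =
        fderiv ℝ g (vech (D k)) (Pi.single w 1) +
          ((1 / 2 : ℝ) • (dup (q k))ᵀ.mulVec
            (_root_.vec (∑ j, (Z k j)ᵀ * V⁻¹ * X * (Xᵀ * V⁻¹ * X)⁻¹ * Xᵀ * V⁻¹ * Z k j))) w := by
  set x₀ := vech (D k)
  replace hVf : Vf = fun v => mixedModelCov Z (Function.update D k (unvech v)) := hVf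
  replace hV : V = mixedModelCov Z D := hV
  have hVf_line : ∀ (d : VechIdx (q k) → ℝ) (t : ℝ),
      Vf (x₀ + t • d) = V + t • ∑ j, Z k j * unvech d * (Z k j)ᵀ := by
    subst hVf hV
    exact mixedModelCov_update_unvech_vech_add_smul Z D (hDsymm k)
  have hVf₀ : Vf x₀ = V := by simpa using hVf_line 0 0
  have hVf_diff : DifferentiableAt ℝ Vf x₀ :=
    hVf ▸ differentiable_mixedModelCov_update_unvech Z D k x₀
  have hV_unit : IsUnit V.det := (isUnit_iff_isUnit_det V).mp hVpd.isUnit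
  have hg_diff : DifferentiableAt ℝ g x₀ := by
    have hinv := hVf_diff.matrix_inv (hVf₀ ▸ hV_unit)
    have hlogdet := hVf_diff.log_det (hVf₀ ▸ hV_unit.ne_zero)
    simp only [hg, dotProduct, mulVec]
    fun_prop
  have hc := hVf_diff.log_det_transpose_mul_inv_mul X (hVf₀ ▸ hV_unit) (hVf₀ ▸ hXVX)
  have hgR : HasFDerivAt gR (fderiv ℝ g x₀ -
      (1 / 2 : ℝ) • fderiv ℝ (fun v => Real.log (Xᵀ * (Vf v)⁻¹ * X).det) x₀) x₀ := by
    rw [hgR]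
    exact hg_diff.hasFDerivAt.sub ((hc.hasFDerivAt.const_add _).const_mul _)
  refine ⟨hgR.differentiableAt, hg_diff, fun w => ?_⟩
  rw [hgR.fderiv, _root_.sub_apply, _root_.smul_apply,
    fderiv_log_det_transpose_mul_inv_mul_apply_of_line X hVf_diff (hVf_line _) hV_unit hXVX,
    trace_mul_sum_mul_mul_transpose_mul, trace_mul_unvech_single_one]
  simp only [Pi.smul_apply, smul_eq_mul, Matrix.mul_assoc]
  ring

/-- At `v = vech(D_k)`, the gradient of the restricted log-likelihood
`l_R = l − (1/2)(−p log σ² + log det(Xᵀ V⁻¹ X))`, regarded as a function of `vech(D_k)`, equals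
the gradient of `l` plus
`(1/2) 𝒟_{q_k}ᵀ vec( ∑_j Z_{(k,j)}ᵀ V⁻¹ X (Xᵀ V⁻¹ X)⁻¹ Xᵀ V⁻¹ Z_{(k,j)} )`. -/
theorem stmt14 (n p r : ℕ) (hn : 0 < n) (hp : 0 < p) (σ : ℝ) (hσ : 0 < σ)
    (e : Fin n → ℝ) (X : Matrix (Fin n) (Fin p) ℝ)
    (l q : Fin r → ℕ)
    (Z : (k : Fin r) → Fin (l k) → Matrix (Fin n) (Fin (q k)) ℝ)
    (D : (k : Fin r) → Matrix (Fin (q k)) (Fin (q k)) ℝ)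
    (hDsymm : ∀ k', (D k').IsSymm)
    (k : Fin r)
    (V : Matrix (Fin n) (Fin n) ℝ)
    (hV : V = 1 + ∑ k', ∑ j, Z k' j * D k' * (Z k' j)ᵀ)
    (hVpd : V.PosDef)
    (hXVX : IsUnit (Xᵀ * V⁻¹ * X).det)
    -- the map sending `v` to the matrix `V` computed with `D_k` replaced by the unique
    -- symmetric matrix whose half-vectorization is `v`
    (Vf : (VechIdx (q k) → ℝ) → Matrix (Fin n) (Fin n) ℝ)
    (hVf : Vf = fun v =>
      1 + ∑ k', ∑ j, Z k' j * Function.update D k (unvech v) k' * (Z k' j)ᵀ)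
    -- the log-likelihood as a function of `vech(D_k)`
    (g : (VechIdx (q k) → ℝ) → ℝ)
    (hg : g = fun v =>
      -(1 / 2 : ℝ) * ((n : ℝ) * Real.log (σ ^ 2)
        + (σ ^ 2)⁻¹ * (e ⬝ᵥ ((Vf v)⁻¹ *ᵥ e))
        + Real.log (Vf v).det))
    -- the restricted log-likelihood as a function of `vech(D_k)`
    (gR : (VechIdx (q k) → ℝ) → ℝ)
    (hgR : gR = fun v =>
      g v - (1 / 2 : ℝ) * (-(p : ℝ) * Real.log (σ ^ 2)
        + Real.log (Xᵀ * (Vf v)⁻¹ * X).det)) :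
    DifferentiableAt ℝ gR (vech (D k)) ∧
    DifferentiableAt ℝ g (vech (D k)) ∧
    ∀ w : VechIdx (q k),
      fderiv ℝ gR (vech (D k)) (Pi.single w 1) =
        fderiv ℝ g (vech (D k)) (Pi.single w 1) +
          ((1 / 2 : ℝ) • (dup (q k))ᵀ.mulVec
            (_root_.vec (∑ j, (Z k j)ᵀ * V⁻¹ * X * (Xᵀ * V⁻¹ * X)⁻¹ * Xᵀ * V⁻¹ * Z k j))) w :=
  stmt14_general n p r σ e X l q Z D hDsymm k V hV hVpd hXVX Vf hVf g hg gR hgR
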